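/- arXiv:1905.03504 — 2 statements merged into one kernel-verified Lean document; each statement's English description precedes it below -/
import Mathlib

section
/- Let G be a discrete inverse semigroup with idempotent set E and associated character space X. Define G * X = {(g, x) : g ∈ G, x ∈ supp(1_{g*g})} with the product topology (G discrete), and the equivalence relation (g,x) ≡ (h,y) iff x = y and there exists e ∈ E with x ∈ supp(1_e) and g e = h e. Then for g ∈ G and open U ⊆ supp(1_{g*g}), the saturation π⁻¹(π({g} × U)) is open in G * X; consequently π({g} × U) is open in the quotient, and such sets generate the quotient topology. -/
/-- An inverse semigroup: a semigroup in which every element `g` has a unique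
generalized inverse `star g`. -/
class InverseSemigroup (G : Type*) extends Semigroup G where
  star : G → G
  mul_star_mul : ∀ g : G, g * star g * g = g
  star_mul_star : ∀ g : G, star g * g * star g = star g
  star_unique : ∀ g h : G, g * h * g = g → h * g * h = h → h = star g

open InverseSemigroup

variable (G : Type*) [InverseSemigroup G]

/-- Idempotents of the inverse semigroup. -/
def IsIdem (e : G) : Prop := e * e = e

/-- The character space `X` of `C*(E)`: nonzero `{0,1}`-valued multiplicative functions
on the semilattice `E` of idempotents, with the topology of pointwise convergence
(the Gelfand topology). A character `x` satisfies `x ∈ e` iff `x e = true`. -/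
def SgChar : Type _ :=
  {x : G → Bool // (∀ e f : G, IsIdem G e → IsIdem G f → x (e * f) = (x e && x f)) ∧
    ∃ e : G, IsIdem G e ∧ x e = true}

instance : TopologicalSpace (SgChar G) :=
  TopologicalSpace.induced Subtype.val (by infer_instance : TopologicalSpace (G → Bool))

/-- The space `G * X = {(g, x) : x ∈ supp (1_{g* g})}`, topologized as a subspace of
`G × X` with `G` discrete. -/
def GX : Type _ := {p : G × SgChar G // p.2.1 (star p.1 * p.1) = true}

instance : TopologicalSpace (GX G) :=
  TopologicalSpace.induced Subtype.val
    (@instTopologicalSpaceProd G (SgChar G) ⊥ inferInstance)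

/-- The equivalence `(g, x) ≡ (h, y)` iff `x = y` and `g e = h e` for some idempotent
`e` with `x ∈ e`. -/
def gxRel (p q : GX G) : Prop :=
  p.1.2 = q.1.2 ∧ ∃ e : G, IsIdem G e ∧ p.1.2.1 e = true ∧ p.1.1 * e = q.1.1 * e

/-- The groupoid associated to the inverse semigroup `G`: the quotient `(G * X)/≡`
with the quotient topology. -/
abbrev Gpd : Type _ := Quot (gxRel G)

/-- `E`-continuity of `G`: for every `g`, the pointwise supremum
`⋁ {1_e : e ∈ E, e ≤ g}` (the indicator of `{x : x e = true for some idempotent e ≤ g}`)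
is a continuous function on `X`. -/
def EContinuous : Prop :=
  ∀ g : G, Continuous
    ({x : SgChar G | ∃ e : G, IsIdem G e ∧ e = g * e ∧ x.1 e = true}.indicator
      (fun _ => (1 : ℝ)))

/-!
Transitivity of `≡` rests on the commutation of idempotents, which follows from the uniqueness
of generalized inverses. Given that, a point `(h, x)` of the saturation of `{g} × U` is
equivalent to some `(g, x)` with `x ∈ U` via an idempotent `e ∋ x` with `h e = g e`, and the
whole open slice `{h} × (U ∩ e)` then lies in the saturation; so saturations of open slices are
open, their images are open in the quotient, and conversely every open set of the quotient is a
union of such images because open sets of `G * X` are unions of open slices.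
-/

section Algebra

variable {G : Type*} [InverseSemigroup G]

theorem InverseSemigroup.star_star (g : G) : star (star g) = g :=
  (star_unique _ _ (star_mul_star g) (mul_star_mul g)).symm

theorem IsIdem.mul_mul_left {e : G} (he : IsIdem G e) (z : G) : e * (e * z) = e * z := by
  rw [← mul_assoc, he]

theorem IsIdem.star_eq {e : G} (he : IsIdem G e) : star e = e := by
  have h : e * e * e = e := by rw [he, he]
  exact (star_unique e e h h).symm

theorem isIdem_star_mul_self (g : G) : IsIdem G (star g * g) := by
  rw [IsIdem, ← mul_assoc, InverseSemigroup.star_mul_star]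

theorem IsIdem.mul {e f : G} (he : IsIdem G e) (hf : IsIdem G f) : IsIdem G (e * f) := by
  set x := star (e * f)
  have hx₁ : e * f * x * (e * f) = e * f := mul_star_mul _
  have hx₂ : x * (e * f) * x = x := star_mul_star _
  -- `f x e` is another generalized inverse of `e f`
  have hfxe : f * x * e = x := by
    apply star_unique
    · calc e * f * (f * x * e) * (e * f) = e * f * x * (e * f) := by
            simp only [mul_assoc, he.mul_mul_left, hf.mul_mul_left]
        _ = e * f := hx₁
    · calc f * x * e * (e * f) * (f * x * e) = f * (x * (e * f) * x) * e := by
            simp only [mul_assoc, he.mul_mul_left, hf.mul_mul_left]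
        _ = f * x * e := by rw [hx₂, mul_assoc]
  have hx : IsIdem G x :=
    calc x * x = f * x * e * (f * x * e) := by rw [hfxe]
      _ = f * (x * (e * f) * x) * e := by simp only [mul_assoc]
      _ = x := by rw [hx₂, hfxe]
  have hef : e * f = x := (InverseSemigroup.star_star (e * f)).symm.trans hx.star_eq
  rwa [hef]

theorem IsIdem.mul_comm {e f : G} (he : IsIdem G e) (hf : IsIdem G f) : e * f = f * e := by
  have hef := he.mul hf
  have hfe := hf.mul he
  have h₁ : e * f * (f * e) * (e * f) = e * f := by
    calc e * f * (f * e) * (e * f) = e * f * (e * f) := by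
          simp only [mul_assoc, he.mul_mul_left, hf.mul_mul_left]
      _ = e * f := hef
  have h₂ : f * e * (e * f) * (f * e) = f * e := by
    calc f * e * (e * f) * (f * e) = f * e * (f * e) := by
          simp only [mul_assoc, he.mul_mul_left, hf.mul_mul_left]
      _ = f * e := hfe
  rw [star_unique _ _ h₁ h₂, hef.star_eq]

end Algebra

section Groupoid

variable {G : Type*} [InverseSemigroup G]

theorem gxRel_equivalence : Equivalence (gxRel G) where
  refl p := ⟨rfl, star p.1.1 * p.1.1, isIdem_star_mul_self _, p.2, rfl⟩
  symm := fun ⟨hx, e, he, hxe, hpq⟩ => ⟨hx.symm, e, he, hx ▸ hxe, hpq.symm⟩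
  trans := fun {p q r} ⟨hpq, e, he, hpe, hpq'⟩ ⟨hqr, f, hf, hqf, hqr'⟩ => by
    refine ⟨hpq.trans hqr, e * f, he.mul hf, ?_, ?_⟩
    · rw [p.1.2.2.1 e f he hf, hpe, hpq, hqf, Bool.true_and]
    · calc p.1.1 * (e * f) = q.1.1 * e * f := by rw [← mul_assoc, hpq']
        _ = q.1.1 * f * e := by rw [mul_assoc, he.mul_comm hf, ← mul_assoc]
        _ = r.1.1 * (e * f) := by rw [hqr', mul_assoc, hf.mul_comm he]

theorem isOpen_setOf_apply_eq_true (e : G) : IsOpen {x : SgChar G | x.1 e = true} := by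
  have : Continuous fun x : SgChar G => x.1 e := (continuous_apply e).comp continuous_induced_dom
  exact this.isOpen_preimage {true} (isOpen_discrete _)

def GX.slice (g : G) (U : Set (SgChar G)) : Set (GX G) := {p | p.1.1 = g ∧ p.1.2 ∈ U}

theorem GX.isOpen_slice (g : G) {U : Set (SgChar G)} (hU : IsOpen U) :
    IsOpen (GX.slice g U) := by
  let _ : TopologicalSpace G := ⊥
  have : DiscreteTopology G := ⟨rfl⟩
  exact ((isOpen_discrete {g}).prod hU).preimage continuous_induced_dom

theorem GX.exists_isOpen_slice_subset {S : Set (GX G)} (hS : IsOpen S) {p : GX G}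
    (hp : p ∈ S) : ∃ W : Set (SgChar G), IsOpen W ∧
      W ⊆ {x : SgChar G | x.1 (star p.1.1 * p.1.1) = true} ∧ p.1.2 ∈ W ∧
      GX.slice p.1.1 W ⊆ S := by
  let _ : TopologicalSpace G := ⊥
  obtain ⟨T, hT, rfl⟩ := isOpen_induced_iff.mp hS
  obtain ⟨u, w, -, hw, hpu, hpw, huw⟩ := isOpen_prod_iff.mp hT p.1.1 p.1.2 hp
  refine ⟨w ∩ {x | x.1 (star p.1.1 * p.1.1) = true},
    hw.inter (isOpen_setOf_apply_eq_true _), Set.inter_subset_right, ⟨hpw, p.2⟩, ?_⟩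
  rintro q ⟨hq, hqw, -⟩
  exact huw ⟨hq ▸ hpu, hqw⟩

theorem mem_preimage_image_slice_iff {g : G} {U : Set (SgChar G)}
    (hsub : U ⊆ {x : SgChar G | x.1 (star g * g) = true}) (p : GX G) :
    p ∈ Quot.mk (gxRel G) ⁻¹' (Quot.mk (gxRel G) '' GX.slice g U) ↔
      p.1.2 ∈ U ∧ ∃ e : G, IsIdem G e ∧ p.1.2.1 e = true ∧ p.1.1 * e = g * e := by
  constructor
  · rintro ⟨q, ⟨rfl, hqU⟩, hqp⟩
    obtain ⟨hx, e, he, hqe, hqp⟩ := gxRel_equivalence.eqvGen_iff.mp (Quot.eq.mp hqp)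
    exact ⟨hx ▸ hqU, e, he, hx ▸ hqe, hqp.symm⟩
  · rintro ⟨hpU, e, he, hpe, hpg⟩
    exact ⟨⟨(g, p.1.2), hsub hpU⟩, ⟨rfl, hpU⟩, (Quot.sound ⟨rfl, e, he, hpe, hpg⟩).symm⟩

theorem isOpen_preimage_image_slice {g : G} {U : Set (SgChar G)} (hU : IsOpen U)
    (hsub : U ⊆ {x : SgChar G | x.1 (star g * g) = true}) :
    IsOpen (Quot.mk (gxRel G) ⁻¹' (Quot.mk (gxRel G) '' GX.slice g U)) := by
  refine isOpen_iff_forall_mem_open.mpr fun p hp => ?_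
  obtain ⟨hpU, e, he, hpe, hpg⟩ := (mem_preimage_image_slice_iff hsub p).mp hp
  refine ⟨GX.slice p.1.1 (U ∩ {x | x.1 e = true}), ?_,
    GX.isOpen_slice _ (hU.inter (isOpen_setOf_apply_eq_true e)), ⟨rfl, hpU, hpe⟩⟩
  rintro q ⟨hq, hqU, hqe⟩
  exact (mem_preimage_image_slice_iff hsub q).mpr ⟨hqU, e, he, hqe, hq ▸ hpg⟩

theorem isOpen_image_slice {g : G} {U : Set (SgChar G)} (hU : IsOpen U)
    (hsub : U ⊆ {x : SgChar G | x.1 (star g * g) = true}) :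
    IsOpen (Quot.mk (gxRel G) '' GX.slice g U) :=
  isOpen_coinduced.mpr (isOpen_preimage_image_slice hU hsub)

theorem Gpd.topology_eq_generateFrom_image_slice :
    (inferInstance : TopologicalSpace (Gpd G)) = TopologicalSpace.generateFrom
      {V : Set (Gpd G) | ∃ (h : G) (W : Set (SgChar G)), IsOpen W ∧
        W ⊆ {x : SgChar G | x.1 (star h * h) = true} ∧ V = Quot.mk (gxRel G) '' GX.slice h W} := by
  refine le_antisymm (le_generateFrom ?_) fun V hV => ?_
  · rintro V ⟨h, W, hW, hWsub, rfl⟩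
    exact isOpen_image_slice hW hWsub
  · refine (@isOpen_iff_forall_mem_open _ (.generateFrom _) V).mpr fun v hv => ?_
    obtain ⟨p, rfl⟩ := Quot.exists_rep v
    obtain ⟨W, hW, hWsub, hpW, hWV⟩ := GX.exists_isOpen_slice_subset hV hv
    exact ⟨_, Set.image_subset_iff.mpr hWV,
      TopologicalSpace.GenerateOpen.basic _ ⟨p.1.1, W, hW, hWsub, rfl⟩, p, ⟨rfl, hpW⟩, rfl⟩

end Groupoid

/-- Basic open sets of the associated groupoid: for `g ∈ G` and `U` open with
`U ⊆ supp (1_{g* g})`, the saturation `π⁻¹(π({g} × U))` is open in `G * X`; consequently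
`π({g} × U)` is open in the quotient, and such sets generate the quotient topology. -/
theorem stmt14 {G : Type*} [InverseSemigroup G] (g : G) (U : Set (SgChar G))
    (hU : IsOpen U) (hsub : U ⊆ {x : SgChar G | x.1 (star g * g) = true}) :
    IsOpen ((Quot.mk (gxRel G)) ⁻¹'
        ((Quot.mk (gxRel G)) '' {p : GX G | p.1.1 = g ∧ p.1.2 ∈ U})) ∧
    IsOpen ((Quot.mk (gxRel G)) '' {p : GX G | p.1.1 = g ∧ p.1.2 ∈ U}) ∧
    (inferInstance : TopologicalSpace (Gpd G)) = TopologicalSpace.generateFrom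
      {V : Set (Gpd G) | ∃ (h : G) (W : Set (SgChar G)), IsOpen W ∧
        W ⊆ {x : SgChar G | x.1 (star h * h) = true} ∧
        V = (Quot.mk (gxRel G)) '' {p : GX G | p.1.1 = h ∧ p.1.2 ∈ W}} :=
  ⟨isOpen_preimage_image_slice hU hsub, isOpen_image_slice hU hsub,
    Gpd.topology_eq_generateFrom_image_slice⟩
end

section
/- In the inverse semigroup G with presentation ⟨t, l, e | tl = lt, t*l = lt*, te = e, t*e = e⟩, the projections pₙ := lⁿ e e* (l*)ⁿ for n ≥ 0 are pairwise incomparable (pₙ ≤ pₘ implies n = m), and each satisfies t pₙ = pₙ, i.e., pₙ ≤ t for all n. -/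
open InverseSemigroup

/-- The projections `pₙ = lⁿ (e e*) (l*)ⁿ`. -/
def projSeq {G : Type*} [InverseSemigroup G] (l e : G) : ℕ → G
  | 0 => e * star e
  | n + 1 => l * projSeq l e n * star l

/-!
`t pₙ = pₙ` is a direct induction from `te = e` and `tl = lt`. For
incomparability, map `G` by its universal property into the symmetric inverse monoid on `ℕ`,
sending `t` to the identity, `l` to the shift `k ↦ k + 1` and `e` to the partial identity of
`{0}`. There `pₙ` becomes the partial identity of `{n}`, and these are pairwise orthogonal.
-/

namespace InverseSemigroup

variable {G H : Type*} [InverseSemigroup G] [InverseSemigroup H]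

theorem map_star {φ : G → H} (hφ : ∀ a b, φ (a * b) = φ a * φ b) (g : G) :
    φ (star g) = star (φ g) :=
  star_unique (φ g) (φ (star g))
    (by rw [← hφ, ← hφ, mul_star_mul])
    (by rw [← hφ, ← hφ, InverseSemigroup.star_mul_star])

theorem map_projSeq {φ : G → H} (hφ : ∀ a b, φ (a * b) = φ a * φ b) (l e : G) (n : ℕ) :
    φ (projSeq l e n) = projSeq (φ l) (φ e) n := by
  induction n with
  | zero => exact (hφ _ _).trans (by rw [map_star hφ]; rfl)
  | succ n ih => exact (hφ _ _).trans (by rw [hφ, ih, map_star hφ]; rfl)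

theorem mul_projSeq_eq_self {t l e : G} (htl : t * l = l * t) (hte : t * e = e) (n : ℕ) :
    t * projSeq l e n = projSeq l e n := by
  induction n with
  | zero => exact (mul_assoc t e _).symm.trans (by rw [hte]; rfl)
  | succ n ih =>
    show t * (l * projSeq l e n * star l) = l * projSeq l e n * star l
    rw [← mul_assoc, ← mul_assoc, htl, mul_assoc l t, ih]

end InverseSemigroup

namespace PEquiv

variable {α β : Type*}

theorem trans_symm_trans (f : α ≃. β) : (f.trans f.symm).trans f = f := by
  ext a b
  simp only [trans_eq_some, eq_some_iff]
  constructor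
  · rintro ⟨c, ⟨d, hd, hcd⟩, hcb⟩
    rwa [f.inj hd hcd]
  · exact fun h => ⟨a, ⟨b, h, h⟩, h⟩

theorem eq_some_of_trans_trans_eq_self {f : α ≃. β} {g : β ≃. α} (hg : (g.trans f).trans g = g)
    {a : β} {b : α} (h : g a = some b) : f b = some a := by
  have h' := h
  rw [← hg, trans_eq_some] at h'
  obtain ⟨c, hac, hcb⟩ := h'
  obtain ⟨d, had, hdc⟩ := (trans_eq_some _ _ _ _).1 hac
  rwa [← Option.some_inj.1 (had.symm.trans h), ← g.inj hcb h]

theorem eq_symm_of_trans_trans {f : α ≃. β} {g : β ≃. α} (hf : (f.trans g).trans f = f)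
    (hg : (g.trans f).trans g = g) : g = f.symm := by
  ext a b
  rw [eq_some_iff]
  exact ⟨eq_some_of_trans_trans_eq_self hg, eq_some_of_trans_trans_eq_self hf⟩

/-- The symmetric inverse monoid on `α`; the product `f * g` is the composite `f ∘ g`. -/
instance : InverseSemigroup (α ≃. α) where
  mul f g := g.trans f
  mul_assoc _ _ _ := (trans_assoc _ _ _).symm
  star := PEquiv.symm
  mul_star_mul f := (trans_assoc _ _ _).symm.trans (trans_symm_trans f)
  star_mul_star f := (trans_assoc _ _ _).symm.trans (trans_symm_trans f.symm)
  star_unique _ _ hfhf hhfh :=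
    eq_symm_of_trans_trans ((trans_assoc _ _ _).trans hfhf) ((trans_assoc _ _ _).trans hhfh)

theorem mul_def (f g : α ≃. α) : f * g = g.trans f := rfl

theorem star_eq_symm (f : α ≃. α) : star f = f.symm := rfl

def natSucc : ℕ ≃. ℕ where
  toFun n := some (n + 1)
  invFun
    | 0 => none
    | n + 1 => some n
  inv a b := by cases b <;> simp [eq_comm]

theorem projSeq_natSucc_single_zero (n : ℕ) :
    projSeq natSucc (single 0 0) n = single n n := by
  induction n with
  | zero => simp [projSeq, mul_def, star_eq_symm]
  | succ n ih =>
    rw [projSeq, ih, mul_def, mul_def, star_eq_symm,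
      single_trans_of_mem n (rfl : n + 1 ∈ natSucc n), trans_single_of_mem]
    exact (eq_some_iff natSucc).2 rfl

theorem eq_of_single_eq_single_mul_single {n m : ℕ} (h : single n n = single m m * single n n) :
    n = m := by
  by_contra hnm
  rw [mul_def, single_trans_single_of_ne hnm] at h
  simpa [single_apply] using congrArg (· n) h

end PEquiv

open PEquiv in
theorem stmt18_general {G : Type*} [InverseSemigroup G] (t l e : G)
    (h1 : t * l = l * t)
    (h3 : t * e = e)
    (huniv : ∀ (H : Type) (_ : InverseSemigroup H) (t' l' e' : H),
      t' * l' = l' * t' → star t' * l' = l' * star t' → t' * e' = e' →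
      star t' * e' = e' →
      ∃ φ : G → H, (∀ a b : G, φ (a * b) = φ a * φ b) ∧
        φ t = t' ∧ φ l = l' ∧ φ e = e') :
    (∀ n : ℕ, t * projSeq l e n = projSeq l e n) ∧
    (∀ n m : ℕ, projSeq l e n = projSeq l e m * projSeq l e n → n = m) := by
  refine ⟨mul_projSeq_eq_self h1 h3, fun n m hnm => ?_⟩
  have hid (f : ℕ ≃. ℕ) : PEquiv.refl ℕ * f = f := trans_refl f
  have hid' (f : ℕ ≃. ℕ) : f * PEquiv.refl ℕ = f := refl_trans f
  obtain ⟨φ, hφ, -, hφl, hφe⟩ := huniv (ℕ ≃. ℕ) inferInstance (PEquiv.refl ℕ) natSucc (single 0 0)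
    (by rw [hid, hid']) (by rw [star_eq_symm, symm_refl, hid, hid']) (hid _)
    (by rw [star_eq_symm, symm_refl, hid])
  have hφp (k : ℕ) : φ (projSeq l e k) = single k k := by
    rw [map_projSeq hφ, hφl, hφe, projSeq_natSucc_single_zero]
  apply eq_of_single_eq_single_mul_single
  rw [← hφp, ← hφp, ← hφ, ← hnm]

/-- In the inverse semigroup `G = ⟨t, l, e | tl = lt, t*l = lt*, te = e, t*e = e⟩`
(an inverse semigroup generated by `t, l, e` satisfying these relations and universal
for them), the projections `pₙ = lⁿ e e* (l*)ⁿ` satisfy `t pₙ = pₙ` (i.e. `pₙ ≤ t`),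
and they are pairwise incomparable: `pₙ ≤ pₘ` implies `n = m`. -/
theorem stmt18 {G : Type*} [InverseSemigroup G] (t l e : G)
    (h1 : t * l = l * t) (h2 : star t * l = l * star t)
    (h3 : t * e = e) (h4 : star t * e = e)
    (huniv : ∀ (H : Type) (_ : InverseSemigroup H) (t' l' e' : H),
      t' * l' = l' * t' → star t' * l' = l' * star t' → t' * e' = e' →
      star t' * e' = e' →
      ∃ φ : G → H, (∀ a b : G, φ (a * b) = φ a * φ b) ∧
        φ t = t' ∧ φ l = l' ∧ φ e = e') :
    (∀ n : ℕ, t * projSeq l e n = projSeq l e n) ∧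
    (∀ n m : ℕ, projSeq l e n = projSeq l e m * projSeq l e n → n = m) :=
  stmt18_general t l e h1 h3 huniv
end
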